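/- arXiv:1209.1011 — 2 statements merged into one kernel-verified Lean document; each statement's English description precedes it below -/
import Mathlib

section
/- Let T = (T, η, μ) be a monad on the category of types. If there exists a type X such that T X has at least two distinct elements, then for every type Y the unit component η_Y : Y → T Y is an injective function. -/
open CategoryTheory

/-- If `T` is a monad on the category of types and some `T X` has at least two distinct
elements, then every unit component `η_Y : Y → T Y` is injective. -/
theorem monad_unit_injective (T : Monad (Type u))
    (h : ∃ (X : Type u) (a b : T.obj X), a ≠ b) :
    ∀ Y : Type u, Function.Injective (T.η.app Y) := by
  intro Y y1 y2 hy
  by_contra hne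
  obtain ⟨X, a, b, hab⟩ := h
  classical
  let f : Y ⟶ T.obj X := TypeCat.ofHom fun y => if y = y1 then a else b
  have key : ∀ y : Y, T.μ.app X (T.map f (T.η.app Y y)) = f y := by
    intro y
    have hnat := types_congr_hom (T.η.naturality f) y
    simp only [Functor.id_map, types_comp_apply] at hnat
    rw [← hnat]
    exact types_congr_hom (T.left_unit X) (f y)
  have hfy : f y1 = f y2 := by rw [← key y1, ← key y2, hy]
  have e1 : f y1 = a := (if_pos rfl : (if y1 = y1 then a else b) = a)
  have e2 : f y2 = b := (if_neg (fun hh : y2 = y1 => hne (Eq.symm hh)) : (if y2 = y1 then a else b) = b)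
  exact hab (e1 ▸ e2 ▸ hfy)
end

section
/- Let C be a category having at least one object and let T = (T, η, μ) be a monad on the category of types. Let F_T : Type u → Kl(T) denote the free functor, which is the identity on objects and sends a function g : X → Y to η_Y ∘ g, and let E : (C ⥤ Type u) → (C ⥤ Kl(T)) be the functor given by whiskering with F_T (postcomposition with F_T on objects and on natural transformations). Then E is faithful if and only if there exists a type X such that T X has at least two distinct elements. -/
open CategoryTheory

private lemma eta_injective {T : Monad (Type u)}
    (h : ∃ (X : Type u) (a b : T.obj X), a ≠ b) (Y : Type u) :
    Function.Injective (T.η.app Y) := by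
  classical
  obtain ⟨X, a, b, hab⟩ := h
  intro y y' hyy
  by_contra hne
  let f : Y ⟶ T.obj X := TypeCat.ofHom fun z => if z = y then a else b
  have key : ∀ z, T.μ.app X (T.map f (T.η.app Y z)) = f z := by
    intro z
    have h1 := ConcreteCategory.congr_hom (T.η.naturality f) z
    simp only [types_comp_apply, Functor.id_map] at h1
    have h2 := ConcreteCategory.congr_hom (T.left_unit X) (f z)
    simp only [types_comp_apply, types_id_apply] at h2
    rw [h1] at *
    exact h2
  have : f y = f y' := by rw [← key y, ← key y', hyy]
  simp only [f, TypeCat.ofHom_apply, if_pos rfl, if_neg (Ne.symm hne)] at this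
  exact hab this

/-- For a category `C` with at least one object and a monad `T` on `Type u`, the functor
`(C ⥤ Type u) ⥤ (C ⥤ Kleisli T)` given by whiskering with the free functor
`Type u ⥤ Kleisli T` (identity on objects, `g ↦ η ∘ g` on morphisms) is faithful if and only
if some `T X` has at least two distinct elements. -/
theorem whiskering_toKleisli_faithful_iff
    {C : Type v} [Category.{w} C] [Nonempty C] (T : Monad (Type u)) :
    ((Functor.whiskeringRight C (Type u) (Kleisli T)).obj
        (Kleisli.Adjunction.toKleisli T)).Faithful ↔
      ∃ (X : Type u) (a b : T.obj X), a ≠ b := by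
  constructor
  · intro hF
    by_contra h
    push_neg at h
    have hsub : ∀ X : Type u, Subsingleton (T.obj X) := fun X => ⟨h X⟩
    obtain ⟨c⟩ := ‹Nonempty C›
    let F : C ⥤ Type u := (Functor.const C).obj (ULift Bool)
    let α : F ⟶ F := { app := fun _ => 𝟙 _ }
    let β : F ⟶ F := { app := fun _ => TypeCat.ofHom fun x => ⟨!x.down⟩ }
    have : ((Functor.whiskeringRight C (Type u) (Kleisli T)).obj
        (Kleisli.Adjunction.toKleisli T)).map α =
        ((Functor.whiskeringRight C (Type u) (Kleisli T)).obj
        (Kleisli.Adjunction.toKleisli T)).map β := by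
      ext c'
      have := hsub (ULift Bool)
      exact @Subsingleton.elim _ this _ _
    have hαβ := hF.map_injective this
    have := ConcreteCategory.congr_hom (congrArg (fun γ => NatTrans.app γ c) hαβ) ⟨true⟩
    simp only [α, β, id] at this
    exact Bool.noConfusion (congrArg ULift.down this)
  · intro h
    refine ⟨fun {F G α β} hmap => ?_⟩
    ext c x
    have := ConcreteCategory.congr_hom (C := Type u) (congrArg (·.of) (congrArg (fun γ => NatTrans.app γ c) hmap)) x
    simp only [Functor.whiskeringRight_obj_map, Functor.whiskerRight_app,
      Kleisli.Adjunction.toKleisli_map_of, types_comp_apply] at this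
    exact eta_injective h (G.obj c) this
end
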